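/- Let Ω ⊆ ℝⁿ be a nonempty open set and let f = (f̲, f̄) and g = (g̲, ḡ) be Hausdorff-continuous interval-valued functions on Ω. If D ⊆ Ω is dense in Ω and f(x) = g(x) for every x ∈ D (i.e. f̲(x) = g̲(x) and f̄(x) = ḡ(x) for x ∈ D), then f = g on all of Ω: f̲ = g̲ and f̄ = ḡ everywhere on Ω. -/
import Mathlib


open Filter Topology

/-- The lower Baire operator: `I(g)(x)` is the sup over neighbourhoods `V` of `x`
of the inf of `g` over `V`. -/
noncomputable def lowerBaire {X : Type*} [TopologicalSpace X] (g : X → EReal) (x : X) : EReal :=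
  ⨆ V ∈ nhds x, ⨅ y ∈ V, g y

/-- The upper Baire operator: `S(g)(x)` is the inf over neighbourhoods `V` of `x`
of the sup of `g` over `V`. -/
noncomputable def upperBaire {X : Type*} [TopologicalSpace X] (g : X → EReal) (x : X) : EReal :=
  ⨅ V ∈ nhds x, ⨆ y ∈ V, g y

/-- The pair `(lo, hi)` is an interval-valued function (`lo ≤ hi` pointwise) which is
segment-continuous: `I(lo) = lo` and `S(hi) = hi`. -/
def IsSCont {X : Type*} [TopologicalSpace X] (lo hi : X → EReal) : Prop :=
  (∀ x, lo x ≤ hi x) ∧ lowerBaire lo = lo ∧ upperBaire hi = hi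

/-- The pair `(lo, hi)` is a Hausdorff-continuous interval-valued function: it is
s-continuous and minimal among s-continuous interval-valued functions `(glo, ghi)`
contained in it pointwise. -/
def IsHCont {X : Type*} [TopologicalSpace X] (lo hi : X → EReal) : Prop :=
  IsSCont lo hi ∧
    ∀ glo ghi : X → EReal, IsSCont glo ghi →
      (∀ x, lo x ≤ glo x) → (∀ x, ghi x ≤ hi x) → glo = lo ∧ ghi = hi

section helpers
variable {X : Type*} [TopologicalSpace X]

lemma lowerBaire_le (g : X → EReal) (x : X) : lowerBaire g x ≤ g x :=
  iSup₂_le fun V hV => iInf₂_le x (mem_of_mem_nhds hV)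

lemma le_upperBaire (g : X → EReal) (x : X) : g x ≤ upperBaire g x :=
  le_iInf₂ fun V hV => le_iSup₂_of_le x (mem_of_mem_nhds hV) le_rfl

lemma upperBaire_mono {g h : X → EReal} (hgh : ∀ y, g y ≤ h y) (x : X) :
    upperBaire g x ≤ upperBaire h x :=
  iInf₂_mono fun V _ => iSup₂_mono fun y _ => hgh y

lemma lowerBaire_mono {g h : X → EReal} (hgh : ∀ y, g y ≤ h y) (x : X) :
    lowerBaire g x ≤ lowerBaire h x :=
  iSup₂_mono fun V _ => iInf₂_mono fun y _ => hgh y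

lemma upperBaire_idem (g : X → EReal) : upperBaire (upperBaire g) = upperBaire g := by
  funext x
  refine le_antisymm ?_ (le_upperBaire _ x)
  refine le_iInf₂ fun V hV => ?_
  obtain ⟨U, hUV, hUopen, hxU⟩ := mem_nhds_iff.mp hV
  calc upperBaire (upperBaire g) x ≤ ⨆ y ∈ U, upperBaire g y :=
        iInf₂_le U (hUopen.mem_nhds hxU)
    _ ≤ ⨆ y ∈ V, g y := by
        refine iSup₂_le fun y hy => ?_
        refine (iInf₂_le U (hUopen.mem_nhds hy)).trans ?_
        exact iSup₂_le fun z hz => le_iSup₂ (f := fun z _ => g z) z (hUV hz)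

lemma lowerBaire_idem (g : X → EReal) : lowerBaire (lowerBaire g) = lowerBaire g := by
  funext x
  refine le_antisymm (lowerBaire_le _ x) ?_
  refine iSup₂_le fun V hV => ?_
  obtain ⟨U, hUV, hUopen, hxU⟩ := mem_nhds_iff.mp hV
  calc ⨅ y ∈ V, g y ≤ ⨅ y ∈ U, lowerBaire g y := by
        refine le_iInf₂ fun y hy => ?_
        refine le_trans ?_ (le_iSup₂ (f := fun W (_ : W ∈ nhds y) => ⨅ z ∈ W, g z) U
          (hUopen.mem_nhds hy))
        exact iInf₂_mono' fun z hz => ⟨z, hUV hz, le_rfl⟩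
    _ ≤ lowerBaire (lowerBaire g) x :=
        le_iSup₂ (f := fun W (_ : W ∈ nhds x) => ⨅ z ∈ W, lowerBaire g z) U
          (hUopen.mem_nhds hxU)

lemma upperBaire_eq_dense {D : Set X} (hD : Dense D) {g : X → EReal}
    (hg : lowerBaire g = g) (x : X) :
    upperBaire g x = ⨅ V ∈ nhds x, ⨆ y ∈ V ∩ D, g y := by
  refine le_antisymm ?_ ?_
  · refine le_iInf₂ fun V hV => ?_
    obtain ⟨U, hUV, hUopen, hxU⟩ := mem_nhds_iff.mp hV
    refine (iInf₂_le U (hUopen.mem_nhds hxU)).trans ?_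
    refine iSup₂_le fun y hy => ?_
    conv_lhs => rw [← hg]
    refine iSup₂_le fun W hW => ?_
    have hne : ((interior W ∩ U) ∩ D).Nonempty :=
      hD.inter_open_nonempty _ (isOpen_interior.inter hUopen)
        ⟨y, mem_interior_iff_mem_nhds.mpr hW, hy⟩
    obtain ⟨z, ⟨hzW, hzU⟩, hzD⟩ := hne
    exact (iInf₂_le z (interior_subset hzW)).trans
      (le_iSup₂ (f := fun z (_ : z ∈ V ∩ D) => g z) z ⟨hUV hzU, hzD⟩)
  · refine le_iInf₂ fun V hV => ?_
    refine (iInf₂_le V hV).trans ?_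
    exact iSup₂_le fun y hy => le_iSup₂ (f := fun z (_ : z ∈ V) => g z) y hy.1

lemma lowerBaire_eq_dense {D : Set X} (hD : Dense D) {g : X → EReal}
    (hg : upperBaire g = g) (x : X) :
    lowerBaire g x = ⨆ V ∈ nhds x, ⨅ y ∈ V ∩ D, g y := by
  refine le_antisymm ?_ ?_
  · refine iSup₂_le fun V hV => ?_
    refine le_trans ?_ (le_iSup₂ (f := fun W (_ : W ∈ nhds x) => ⨅ y ∈ W ∩ D, g y) V hV)
    exact iInf₂_mono' fun y hy => ⟨y, hy.1, le_rfl⟩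
  · refine iSup₂_le fun V hV => ?_
    obtain ⟨U, hUV, hUopen, hxU⟩ := mem_nhds_iff.mp hV
    refine le_trans ?_ (le_iSup₂ (f := fun W (_ : W ∈ nhds x) => ⨅ y ∈ W, g y) U
      (hUopen.mem_nhds hxU))
    refine le_iInf₂ fun y hy => ?_
    conv_rhs => rw [← hg]
    refine le_iInf₂ fun W hW => ?_
    have hne : ((interior W ∩ U) ∩ D).Nonempty :=
      hD.inter_open_nonempty _ (isOpen_interior.inter hUopen)
        ⟨y, mem_interior_iff_mem_nhds.mpr hW, hy⟩
    obtain ⟨z, ⟨hzW, hzU⟩, hzD⟩ := hne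
    exact (iInf₂_le z ⟨hUV hzU, hzD⟩).trans
      (le_iSup₂ (f := fun z (_ : z ∈ W) => g z) z (interior_subset hzW))

end helpers

lemma IsHCont.hi_eq {X : Type*} [TopologicalSpace X] {lo hi : X → EReal}
    (h : IsHCont lo hi) : hi = upperBaire lo := by
  obtain ⟨⟨hle, hlo, hhi⟩, hmin⟩ := h
  have hs : IsSCont lo (upperBaire lo) :=
    ⟨fun x => le_upperBaire lo x, hlo, upperBaire_idem lo⟩
  exact ((hmin lo (upperBaire lo) hs (fun _ => le_rfl)
    (fun x => (upperBaire_mono hle x).trans (le_of_eq (congrFun hhi x)))).2).symm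

lemma IsHCont.lo_eq {X : Type*} [TopologicalSpace X] {lo hi : X → EReal}
    (h : IsHCont lo hi) : lo = lowerBaire hi := by
  obtain ⟨⟨hle, hlo, hhi⟩, hmin⟩ := h
  have hs : IsSCont (lowerBaire hi) hi :=
    ⟨fun x => lowerBaire_le hi x, lowerBaire_idem hi, hhi⟩
  exact ((hmin (lowerBaire hi) hi hs
    (fun x => (le_of_eq (congrFun hlo x).symm).trans (lowerBaire_mono hle x))
    (fun _ => le_rfl)).1).symm

/-- Theorem A1 d): two Hausdorff-continuous interval-valued functions on a nonempty
open set Ω ⊆ ℝⁿ which agree on a dense subset agree everywhere. -/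
theorem hcont_eq_of_eq_on_dense {n : ℕ} (Ω : Set (Fin n → ℝ))
    (hΩ : IsOpen Ω) (hne : Ω.Nonempty)
    (flo fhi glo ghi : ↥Ω → EReal)
    (hf : IsHCont flo fhi) (hg : IsHCont glo ghi)
    (D : Set ↥Ω) (hD : Dense D)
    (h : ∀ x ∈ D, flo x = glo x ∧ fhi x = ghi x) :
    flo = glo ∧ fhi = ghi := by
  have hhi : fhi = ghi := by
    funext x
    rw [hf.hi_eq, hg.hi_eq, upperBaire_eq_dense hD hf.1.2.1 x,
      upperBaire_eq_dense hD hg.1.2.1 x]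
    exact iInf_congr fun V => iInf_congr fun _ => iSup_congr fun y =>
      iSup_congr fun hy => (h y hy.2).1
  refine ⟨?_, hhi⟩
  funext x
  rw [hf.lo_eq, hg.lo_eq, lowerBaire_eq_dense hD hf.1.2.2 x,
    lowerBaire_eq_dense hD hg.1.2.2 x]
  exact iSup_congr fun V => iSup_congr fun _ => iInf_congr fun y =>
    iInf_congr fun hy => (h y hy.2).2
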